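/- Optimality of the sensing-energy and batch-size allocation (Proposition 1, via Lagrangian sufficiency): Fix integers K, T ≥ 1, positive constants A_t, C_{k,t}, τ_{k,t}, w_k (for k ∈ {1,…,K}, t ∈ {1,…,T}), nonnegative constants P_{k,t}, energy budgets E_k ∈ ℝ, and box bounds 0 < l_t ≤ u_t. Consider the problem of minimizing Φ(e, b) = Σ_{t=1}^T [ A_t/b_t + Σ_{k=1}^K C_{k,t}/e_{k,t} ] over variables e_{k,t} > 0 and b_t ∈ [l_t, u_t], subject to the energy constraints Σ_{t=1}^T ( τ_{k,t}·e_{k,t} + w_k·b_t + P_{k,t} ) ≤ E_k for every k ∈ {1,…,K}. Suppose λ_1, …, λ_K > 0 are such that the point defined by e*_{k,t} = √( C_{k,t} / (λ_k·τ_{k,t}) ) and b*_t = min( u_t, max( l_t, √( A_t / Σ_{k=1}^K λ_k·w_k ) ) ) satisfies every energy constraint with equality, i.e., Σ_{t=1}^T ( τ_{k,t}·e*_{k,t} + w_k·b*_t + P_{k,t} ) = E_k for every k. Then (e*, b*) is a global minimizer of Φ over the feasible set: Φ(e*, b*) ≤ Φ(e, b) for every (e, b) with e_{k,t} > 0, b_t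 ∈ [l_t, u_t] satisfying all the energy constraints. -/

import Mathlib

private lemma amgm_key (c d x : ℝ) (hc : 0 < c) (hd : 0 < d) (hx : 0 < x) :
    c / Real.sqrt (c / d) + d * Real.sqrt (c / d) ≤ c / x + d * x := by
  set m := Real.sqrt (c / d) with hm
  have hm0 : 0 < m := Real.sqrt_pos.mpr (by positivity)
  have hm2 : m ^ 2 = c / d := Real.sq_sqrt (by positivity)
  have hcd : c = d * m ^ 2 := by
    field_simp at hm2; linarith
  have h1 : c / m = d * m := by
    rw [hcd]; field_simp
  have h2 : 0 ≤ d * (x - m) ^ 2 / x := by positivity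
  have h3 : c / x + d * x - (d * m + d * m) = d * (x - m) ^ 2 / x := by
    rw [hcd]; field_simp; ring
  linarith

private lemma box_key (A s l u b : ℝ) (hA : 0 < A) (hs : 0 < s) (hl : 0 < l)
    (hlb : l ≤ b) (hbu : b ≤ u) :
    A / min u (max l (Real.sqrt (A / s))) + s * min u (max l (Real.sqrt (A / s)))
      ≤ A / b + s * b := by
  set m := Real.sqrt (A / s) with hm
  have hlu : l ≤ u := hlb.trans hbu
  have hm0 : 0 < m := Real.sqrt_pos.mpr (by positivity)
  have hm2 : m ^ 2 = A / s := Real.sq_sqrt (by positivity)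
  have hAm : A = s * m ^ 2 := by field_simp at hm2; linarith
  set bs := min u (max l m) with hbs
  have hbsl : l ≤ bs := le_min hlu (le_max_left _ _)
  have hbs0 : 0 < bs := lt_of_lt_of_le hl hbsl
  have hb0 : 0 < b := lt_of_lt_of_le hl hlb
  have hdiff : A / b + s * b - (A / bs + s * bs)
      = (b - bs) * (s * b * bs - A) / (b * bs) := by
    field_simp; ring
  have hkey : 0 ≤ (b - bs) * (s * b * bs - A) := by
    rcases le_or_gt m l with h | h
    · have hbse : bs = l := by rw [hbs, max_eq_left h, min_eq_right hlu]
      rw [hbse, hAm]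
      have hbl : m ^ 2 ≤ b * l := by nlinarith
      exact mul_nonneg (by linarith) (by nlinarith)
    · rcases le_or_gt m u with h2 | h2
      · have hbse : bs = m := by
          rw [hbs, max_eq_right h.le, min_eq_right h2]
        rw [hbse, hAm]
        nlinarith [sq_nonneg (b - m)]
      · have hbse : bs = u := by
          rw [hbs, max_eq_right h.le, min_eq_left h2.le]
        rw [hbse, hAm]
        have hbu2 : b * u ≤ m ^ 2 := by nlinarith
        nlinarith [mul_nonneg (by linarith : (0:ℝ) ≤ u - b)
          (by nlinarith : (0:ℝ) ≤ s * m ^ 2 - s * b * u)]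
  have : 0 ≤ (b - bs) * (s * b * bs - A) / (b * bs) :=
    div_nonneg hkey (by positivity)
  linarith

/-- Optimality of the sensing-energy and batch-size allocation
(Proposition 1, via Lagrangian sufficiency). -/
theorem sensing_energy_batch_size_optimality
    (K T : ℕ) (hK : 1 ≤ K) (hT : 1 ≤ T)
    (A : Fin T → ℝ) (hA : ∀ t, 0 < A t)
    (C : Fin K → Fin T → ℝ) (hC : ∀ k t, 0 < C k t)
    (τ : Fin K → Fin T → ℝ) (hτ : ∀ k t, 0 < τ k t)
    (w : Fin K → ℝ) (hw : ∀ k, 0 < w k)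
    (Pc : Fin K → Fin T → ℝ) (hPc : ∀ k t, 0 ≤ Pc k t)
    (En : Fin K → ℝ)
    (l u : Fin T → ℝ) (hl : ∀ t, 0 < l t) (hlu : ∀ t, l t ≤ u t)
    (Φ : (Fin K → Fin T → ℝ) → (Fin T → ℝ) → ℝ)
    (hΦ : ∀ e b, Φ e b = ∑ t, (A t / b t + ∑ k, C k t / e k t))
    (lam : Fin K → ℝ) (hlam : ∀ k, 0 < lam k)
    (estar : Fin K → Fin T → ℝ) (bstar : Fin T → ℝ)
    (hestar : ∀ k t, estar k t = Real.sqrt (C k t / (lam k * τ k t)))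
    (hbstar : ∀ t, bstar t =
      min (u t) (max (l t) (Real.sqrt (A t / (∑ k, lam k * w k)))))
    (heq : ∀ k, (∑ t, (τ k t * estar k t + w k * bstar t + Pc k t)) = En k) :
    ∀ (e : Fin K → Fin T → ℝ) (b : Fin T → ℝ),
      (∀ k t, 0 < e k t) → (∀ t, b t ∈ Set.Icc (l t) (u t)) →
      (∀ k, (∑ t, (τ k t * e k t + w k * b t + Pc k t)) ≤ En k) →
      Φ estar bstar ≤ Φ e b := by
  intro e b he hb hcon
  set s : ℝ := ∑ k, lam k * w k with hsdef
  have hs : 0 < s := by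
    apply Finset.sum_pos
    · intro k _; exact mul_pos (hlam k) (hw k)
    · exact ⟨⟨0, by omega⟩, Finset.mem_univ _⟩
  -- Lagrangian comparison, per round t
  have hL : ∀ t : Fin T,
      A t / bstar t + s * bstar t + ∑ k, (C k t / estar k t + lam k * (τ k t * estar k t))
        ≤ A t / b t + s * b t + ∑ k, (C k t / e k t + lam k * (τ k t * e k t)) := by
    intro t
    have h1 : A t / bstar t + s * bstar t ≤ A t / b t + s * b t := by
      rw [hbstar t]
      exact box_key (A t) s (l t) (u t) (b t) (hA t) hs (hl t) (hb t).1 (hb t).2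
    have h2 : ∑ k, (C k t / estar k t + lam k * (τ k t * estar k t))
        ≤ ∑ k, (C k t / e k t + lam k * (τ k t * e k t)) := by
      apply Finset.sum_le_sum
      intro k _
      have hd : 0 < lam k * τ k t := mul_pos (hlam k) (hτ k t)
      have := amgm_key (C k t) (lam k * τ k t) (e k t) (hC k t) hd (he k t)
      rw [hestar k t]
      calc C k t / Real.sqrt (C k t / (lam k * τ k t))
            + lam k * (τ k t * Real.sqrt (C k t / (lam k * τ k t)))
          = C k t / Real.sqrt (C k t / (lam k * τ k t))
            + lam k * τ k t * Real.sqrt (C k t / (lam k * τ k t)) := by ring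
        _ ≤ C k t / e k t + lam k * τ k t * e k t := this
        _ = C k t / e k t + lam k * (τ k t * e k t) := by ring
    linarith
  -- assemble
  have swap : ∀ (ee : Fin K → Fin T → ℝ) (bb : Fin T → ℝ),
      ∑ k, lam k * (∑ t, (τ k t * ee k t + w k * bb t + Pc k t))
      = (∑ t, (s * bb t + ∑ k, lam k * (τ k t * ee k t)))
        + ∑ k, lam k * ∑ t, Pc k t := by
    intro ee bb
    simp only [mul_add, Finset.mul_sum, Finset.sum_add_distrib]
    rw [Finset.sum_comm (f := fun k t => lam k * (τ k t * ee k t)),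
      Finset.sum_comm (f := fun k t => lam k * (w k * bb t))]
    have : ∀ t : Fin T, ∑ k, lam k * (w k * bb t) = s * bb t := by
      intro t
      rw [hsdef, Finset.sum_mul]
      exact Finset.sum_congr rfl (fun k _ => by ring)
    simp only [this]
    ring
  have hLag :
      Φ estar bstar + ∑ k, lam k * (∑ t, (τ k t * estar k t + w k * bstar t + Pc k t))
        ≤ Φ e b + ∑ k, lam k * (∑ t, (τ k t * e k t + w k * b t + Pc k t)) := by
    have expand : ∀ (ee : Fin K → Fin T → ℝ) (bb : Fin T → ℝ),
        Φ ee bb + ∑ k, lam k * (∑ t, (τ k t * ee k t + w k * bb t + Pc k t))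
        = (∑ t, (A t / bb t + s * bb t
            + ∑ k, (C k t / ee k t + lam k * (τ k t * ee k t))))
          + ∑ k, lam k * ∑ t, Pc k t := by
      intro ee bb
      rw [hΦ, swap]
      simp only [Finset.sum_add_distrib]
      ring
    rw [expand, expand]
    have := Finset.sum_le_sum (fun t (_ : t ∈ Finset.univ) => hL t)
    linarith
  have hrhs : ∑ k, lam k * (∑ t, (τ k t * e k t + w k * b t + Pc k t))
      ≤ ∑ k, lam k * En k := by
    apply Finset.sum_le_sum
    intro k _
    exact mul_le_mul_of_nonneg_left (hcon k) (hlam k).le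
  have hlhs : ∑ k, lam k * (∑ t, (τ k t * estar k t + w k * bstar t + Pc k t))
      = ∑ k, lam k * En k := by
    apply Finset.sum_congr rfl
    intro k _
    rw [heq k]
  linarith
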